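/- Let n ≥ 1, d ≥ 1, η ∈ [0,1), ν ∈ (0,1] and ω_ran ≥ 0. Let u_1,…,u_n ∈ ℝ^d and let Z_1,…,Z_n be square-integrable random vectors in ℝ^d on a common probability space such that ‖E[Z_i] − u_i‖ ≤ η‖u_i‖ for every i ∈ {1,…,n}, and such that the aggregated variance bound E[‖(1/n)Σ_{i=1}^n (Z_i − E[Z_i])‖²] ≤ (ω_ran/n)·Σ_{i=1}^n ‖u_i‖² holds. Then E[‖(1/n)Σ_{i=1}^n (νZ_i − u_i)‖²] ≤ ((1 − ν + νη)² + ν²ω_ran)·(1/n)Σ_{i=1}^n ‖u_i‖². -/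

import Mathlib

/-!
Centre each `Z i` at its mean `m i`. The averaged estimator error then splits pointwise as
`ν • W + b`, where `W` is the averaged centred noise and `b = (1/n) ∑ (ν m i - u i)` is
deterministic. Since `W` has mean zero the cross term vanishes in expectation, so the mean square
error is `ν² E‖W‖² + ‖b‖²`. The first term is the assumed variance bound; the second is bounded
by convexity of `‖·‖²` together with `‖ν m - u‖ ≤ ν ‖m - u‖ + (1 - ν) ‖u‖ ≤ (1 - ν + ν η) ‖u‖`.
-/

open MeasureTheory

section Centering

variable {Ω : Type*} [MeasurableSpace Ω] {P : Measure Ω} [IsProbabilityMeasure P]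

theorem integral_sum_sub_integral_eq_zero {ι E : Type*} [Fintype ι] [NormedAddCommGroup E]
    [NormedSpace ℝ E] [CompleteSpace E] {X : ι → Ω → E} (hX : ∀ i, Integrable (X i) P) :
    ∫ a, ∑ i, (X i a - ∫ a', X i a' ∂P) ∂P = 0 := by
  rw [integral_finsetSum (f := fun i a => X i a - ∫ a', X i a' ∂P) _
    fun i _ => (hX i).sub (integrable_const _)]
  refine Finset.sum_eq_zero fun i _ => ?_
  rw [integral_sub (hX i) (integrable_const _), integral_const, probReal_univ, one_smul,
    sub_self]

theorem integral_norm_add_sq_of_integral_eq_zero {E : Type*} [NormedAddCommGroup E]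
    [InnerProductSpace ℝ E] [CompleteSpace E] {Y : Ω → E} (hY : MemLp Y 2 P)
    (hmean : ∫ a, Y a ∂P = 0) (b : E) :
    ∫ a, ‖Y a + b‖ ^ 2 ∂P = ∫ a, ‖Y a‖ ^ 2 ∂P + ‖b‖ ^ 2 := by
  have hY_sq : Integrable (fun a => ‖Y a‖ ^ 2) P := hY.integrable_norm_pow two_ne_zero
  have hY_inner : Integrable (fun a => 2 * inner ℝ (Y a) b) P :=
    ((hY.integrable one_le_two).inner_const b).const_mul 2
  have hcross : ∫ a, 2 * inner ℝ (Y a) b ∂P = 0 := by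
    simp_rw [real_inner_comm b]
    rw [integral_const_mul, integral_inner (hY.integrable one_le_two), hmean,
      inner_zero_right, mul_zero]
  simp_rw [norm_add_sq_real]
  rw [integral_add (f := fun a => ‖Y a‖ ^ 2 + 2 * inner ℝ (Y a) b) (hY_sq.add hY_inner)
      (integrable_const _), integral_add hY_sq hY_inner,
    hcross, integral_const, probReal_univ, one_smul, add_zero]

end Centering

theorem norm_inv_smul_sum_sq_le {ι E : Type*} [Fintype ι] [SeminormedAddCommGroup E]
    [NormedSpace ℝ E] (v : ι → E) :
    ‖(Fintype.card ι : ℝ)⁻¹ • ∑ i, v i‖ ^ 2 ≤ (Fintype.card ι : ℝ)⁻¹ * ∑ i, ‖v i‖ ^ 2 := by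
  set N : ℝ := (Fintype.card ι : ℝ)
  have hN : N⁻¹ ^ 2 * N = N⁻¹ := by
    rcases eq_or_ne N 0 with h | h
    · simp [h]
    · field_simp
  calc ‖N⁻¹ • ∑ i, v i‖ ^ 2 = N⁻¹ ^ 2 * ‖∑ i, v i‖ ^ 2 := by
        rw [norm_smul, mul_pow, Real.norm_eq_abs, sq_abs]
    _ ≤ N⁻¹ ^ 2 * (∑ i, ‖v i‖) ^ 2 := by gcongr; exact norm_sum_le _ _
    _ ≤ N⁻¹ ^ 2 * (N * ∑ i, ‖v i‖ ^ 2) := by gcongr; exact sq_sum_le_card_mul_sum_sq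
    _ = N⁻¹ * ∑ i, ‖v i‖ ^ 2 := by rw [← mul_assoc, hN]

theorem norm_smul_sub_le_of_norm_sub_le {E : Type*} [SeminormedAddCommGroup E]
    [NormedSpace ℝ E] {m u : E} {ν η : ℝ} (hν0 : 0 ≤ ν) (hν1 : ν ≤ 1)
    (h : ‖m - u‖ ≤ η * ‖u‖) :
    ‖ν • m - u‖ ≤ (1 - ν + ν * η) * ‖u‖ := by
  have hsplit : ν • m - u = ν • (m - u) - (1 - ν) • u := by module
  calc ‖ν • m - u‖ ≤ ‖ν • (m - u)‖ + ‖(1 - ν) • u‖ := hsplit ▸ norm_sub_le _ _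
    _ = ν * ‖m - u‖ + (1 - ν) * ‖u‖ := by
        rw [norm_smul, norm_smul, Real.norm_of_nonneg hν0, Real.norm_of_nonneg (by linarith)]
    _ ≤ ν * (η * ‖u‖) + (1 - ν) * ‖u‖ := by gcongr
    _ = (1 - ν + ν * η) * ‖u‖ := by ring

theorem norm_inv_smul_sum_smul_sub_sq_le {ι E : Type*} [Fintype ι] [SeminormedAddCommGroup E]
    [NormedSpace ℝ E] {m u : ι → E} {ν η : ℝ} (hν0 : 0 ≤ ν) (hν1 : ν ≤ 1)
    (h : ∀ i, ‖m i - u i‖ ≤ η * ‖u i‖) :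
    ‖(Fintype.card ι : ℝ)⁻¹ • ∑ i, (ν • m i - u i)‖ ^ 2 ≤
      (1 - ν + ν * η) ^ 2 * ((Fintype.card ι : ℝ)⁻¹ * ∑ i, ‖u i‖ ^ 2) :=
  calc _ ≤ (Fintype.card ι : ℝ)⁻¹ * ∑ i, ‖ν • m i - u i‖ ^ 2 := norm_inv_smul_sum_sq_le _
    _ ≤ (Fintype.card ι : ℝ)⁻¹ * ∑ i, ((1 - ν + ν * η) * ‖u i‖) ^ 2 := by
        gcongr with i
        exact norm_smul_sub_le_of_norm_sub_le hν0 hν1 (h i)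
    _ = _ := by simp only [mul_pow, ← Finset.mul_sum]; ring

theorem efbv_estimator_bound_general
    {n d : ℕ}
    {Ω : Type*} [MeasurableSpace Ω] (P : Measure Ω) [IsProbabilityMeasure P]
    (η ν ωran : ℝ) (hν0 : 0 < ν) (hν1 : ν ≤ 1)
    (u : Fin n → EuclideanSpace ℝ (Fin d)) (Z : Fin n → Ω → EuclideanSpace ℝ (Fin d))
    (hZ : ∀ i, MemLp (Z i) 2 P)
    (hbias : ∀ i, ‖(∫ a, Z i a ∂P) - u i‖ ≤ η * ‖u i‖)
    (hvar : (∫ a, ‖(n : ℝ)⁻¹ • ∑ i, (Z i a - ∫ a', Z i a' ∂P)‖ ^ 2 ∂P) ≤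
      (ωran / n) * ∑ i, ‖u i‖ ^ 2) :
    (∫ a, ‖(n : ℝ)⁻¹ • ∑ i, (ν • Z i a - u i)‖ ^ 2 ∂P) ≤
      ((1 - ν + ν * η) ^ 2 + ν ^ 2 * ωran) * ((n : ℝ)⁻¹ * ∑ i, ‖u i‖ ^ 2) := by
  set m : Fin n → EuclideanSpace ℝ (Fin d) := fun i => ∫ a, Z i a ∂P
  set W : Ω → EuclideanSpace ℝ (Fin d) := fun a => (n : ℝ)⁻¹ • ∑ i, (Z i a - m i)
  set b : EuclideanSpace ℝ (Fin d) := (n : ℝ)⁻¹ • ∑ i, (ν • m i - u i)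
  have hνW : MemLp (fun a => ν • W a) 2 P :=
    ((memLp_finsetSum (f := fun i a => Z i a - m i) Finset.univ fun i _ =>
      (hZ i).sub (memLp_const (m i))).const_smul (n : ℝ)⁻¹).const_smul ν
  have hνW_mean : ∫ a, ν • W a ∂P = 0 := by
    rw [integral_smul, integral_smul,
      integral_sum_sub_integral_eq_zero fun i => (hZ i).integrable one_le_two, smul_zero,
      smul_zero]
  have hsplit : ∀ a, (n : ℝ)⁻¹ • ∑ i, (ν • Z i a - u i) = ν • W a + b := fun a => by
    simp only [W, b, Finset.smul_sum, ← Finset.sum_add_distrib]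
    exact Finset.sum_congr rfl fun i _ => by module
  have hb : ‖b‖ ^ 2 ≤ (1 - ν + ν * η) ^ 2 * ((n : ℝ)⁻¹ * ∑ i, ‖u i‖ ^ 2) := by
    simpa only [Fintype.card_fin] using norm_inv_smul_sum_smul_sub_sq_le hν0.le hν1 hbias
  calc (∫ a, ‖(n : ℝ)⁻¹ • ∑ i, (ν • Z i a - u i)‖ ^ 2 ∂P)
      = ν ^ 2 * ∫ a, ‖W a‖ ^ 2 ∂P + ‖b‖ ^ 2 := by
        simp_rw [hsplit, integral_norm_add_sq_of_integral_eq_zero hνW hνW_mean, norm_smul,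
          mul_pow, Real.norm_eq_abs, sq_abs, integral_const_mul]
    _ ≤ ν ^ 2 * ((ωran / n) * ∑ i, ‖u i‖ ^ 2) +
          (1 - ν + ν * η) ^ 2 * ((n : ℝ)⁻¹ * ∑ i, ‖u i‖ ^ 2) := by
        gcongr
    _ = ((1 - ν + ν * η) ^ 2 + ν ^ 2 * ωran) * ((n : ℝ)⁻¹ * ∑ i, ‖u i‖ ^ 2) := by ring

/-- Bound on the EF-BV aggregated stochastic gradient estimator: if each `Z i` compresses
`u i` with relative bias `η` and the collection has average relative variance `ωran`, then
for any `ν ∈ (0,1]`, `E‖(1/n)∑ᵢ(νZᵢ - uᵢ)‖² ≤ ((1-ν+νη)² + ν²ωran)·(1/n)∑ᵢ‖uᵢ‖²`. -/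
theorem efbv_estimator_bound
    {n d : ℕ} (hn : 1 ≤ n) (hd : 1 ≤ d)
    {Ω : Type*} [MeasurableSpace Ω] (P : Measure Ω) [IsProbabilityMeasure P]
    (η ν ωran : ℝ) (hη0 : 0 ≤ η) (hη1 : η < 1) (hν0 : 0 < ν) (hν1 : ν ≤ 1)
    (hωran : 0 ≤ ωran)
    (u : Fin n → EuclideanSpace ℝ (Fin d)) (Z : Fin n → Ω → EuclideanSpace ℝ (Fin d))
    (hZ : ∀ i, MemLp (Z i) 2 P)
    (hbias : ∀ i, ‖(∫ a, Z i a ∂P) - u i‖ ≤ η * ‖u i‖)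
    (hvar : (∫ a, ‖(n : ℝ)⁻¹ • ∑ i, (Z i a - ∫ a', Z i a' ∂P)‖ ^ 2 ∂P) ≤
      (ωran / n) * ∑ i, ‖u i‖ ^ 2) :
    (∫ a, ‖(n : ℝ)⁻¹ • ∑ i, (ν • Z i a - u i)‖ ^ 2 ∂P) ≤
      ((1 - ν + ν * η) ^ 2 + ν ^ 2 * ωran) * ((n : ℝ)⁻¹ * ∑ i, ‖u i‖ ^ 2) :=
  efbv_estimator_bound_general P η ν ωran hν0 hν1 u Z hZ hbias hvar
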